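/- arXiv:1802.08877 — 2 statements merged into one kernel-verified Lean document; each statement's English description precedes it below -/
import Mathlib

section
/- Let G be a group of nilpotency class ≤ 5 and suppose e > 2 and g^{2^e} = 1 for all g ∈ G, γ₄(G)^{2^{e-1}} = 1, and γ₃(G)^{2^e} = 1. Then for all x, y ∈ G: [x,y]^{2^e} = ([x,y,x,x,y]·[x,y,y,y,x])^{C(2^e,4)}. -/
/-- The commutator convention of the paper: `[x,y] = x⁻¹y⁻¹xy`. -/
def pcomm {G : Type*} [Group G] (x y : G) : G := x⁻¹ * y⁻¹ * x * y

/-- Left-normed iterated commutator `[x, _k y]` with `[x, _0 y] = x`. -/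
def pcommIter {G : Type*} [Group G] (x y : G) : ℕ → G
  | 0 => x
  | k + 1 => pcomm (pcommIter x y k) y

/-!
Write `K = C(2^e, 2)` and `M = C(2^e, 4)`. Conjugation by `y` acts on `c k = [x, _k y]` by
`c k ↦ c k * c (k + 1)`, and in class 5 iterating this gives the Hall–Petresco expansion
`[x, y^n] = c₁^n c₂^C(n,2) c₃^C(n,3) c₄^C(n,4) [c₂, c₁]^C(n,3)`. For `n = 2^e` the left side is
trivial and `2^(e-1)` divides `C(2^e, 3)`, so the exponent hypotheses leave the relation
`[x,y,y]^K [x,y,y,y,y]^M = 1`. Use it for `(x, y)`, `(y, x)` and `(x, yx)`: modulo terms that die,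
`[x, yx, yx]` and `[x, yx, yx, yx, yx]` expand multilinearly, and `[x,y,x,y,z] = [x,y,y,x,z]`.
Since `γ₃(G)` is abelian the three relations combine to `([x,y,x,x,y] [x,y,y,y,x])^M = 1`,
while `[x,y]^(2^e) = 1` by the exponent hypothesis.
-/

open scoped commutatorElement IsMulCommutative

-- Mathlib's indexing: `γ n` is the paper's `γ_{n+1}`, so class ≤ 5 reads `γ 5 = ⊥`.
local notation "γ" => Subgroup.lowerCentralSeries ⊤

section Identities

variable {G : Type*} [Group G] (a b c : G)

theorem pcomm_eq_commutatorElement : pcomm a b = ⁅a⁻¹, b⁻¹⁆ := by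
  simp [pcomm, commutatorElement_def]

theorem pcomm_self : pcomm a a = 1 := by simp [pcomm]

theorem pcomm_one_right : pcomm a 1 = 1 := by simp [pcomm]

theorem pcomm_inv : (pcomm a b)⁻¹ = pcomm b a := by simp only [pcomm]; group

theorem inv_mul_mul_eq_mul_pcomm : b⁻¹ * a * b = a * pcomm a b := by simp only [pcomm]; group

theorem mul_eq_mul_mul_pcomm : a * b = b * a * pcomm a b := by simp only [pcomm]; group

theorem pcomm_mul_right : pcomm a (b * c) = pcomm a c * pcomm a b * pcomm (pcomm a b) c := by
  simp only [pcomm]; group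

theorem pcomm_mul_left : pcomm (a * b) c = pcomm a c * pcomm (pcomm a c) b * pcomm b c := by
  simp only [pcomm]; group

theorem pcomm_inv_left : pcomm a⁻¹ b = (pcomm a b)⁻¹ * pcomm (pcomm a b)⁻¹ a⁻¹ := by
  simp only [pcomm]; group

theorem pcomm_eq_one_iff : pcomm a b = 1 ↔ Commute a b := by
  rw [show pcomm a b = (b * a)⁻¹ * (a * b) by simp only [pcomm]; group, inv_mul_eq_one]
  exact eq_comm

end Identities

theorem mul_pow_of_commute_pcomm {G : Type*} [Group G] {a b : G} (ha : Commute a (pcomm b a))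
    (hb : Commute b (pcomm b a)) (n : ℕ) :
    (a * b) ^ n = a ^ n * b ^ n * pcomm b a ^ n.choose 2 := by
  set d := pcomm b a
  have hba (m : ℕ) : b ^ m * a = a * (b ^ m * d ^ m) := by
    have hconj : (a⁻¹ * b * a) ^ m = a⁻¹ * b ^ m * a := by
      simpa using conj_pow (a := a⁻¹) (b := b) (i := m)
    rw [inv_mul_mul_eq_mul_pcomm, hb.mul_pow] at hconj
    rw [hconj]; group
  induction n with
  | zero => simp
  | succ n ih =>
    calc (a * b) ^ (n + 1) = a ^ n * (b ^ n * a) * (d ^ n.choose 2 * b) := by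
          rw [pow_succ, ih]; simp only [mul_assoc, (ha.pow_right _).symm.left_comm]
      _ = a ^ (n + 1) * b ^ n * ((d ^ n * d ^ n.choose 2) * b) := by
          rw [hba, pow_succ a]; simp only [mul_assoc]
      _ = a ^ (n + 1) * b ^ (n + 1) * d ^ (n + 1).choose 2 := by
          rw [((hb.pow_right _).mul_right (hb.pow_right _)).symm.eq, Nat.choose_succ_succ,
            Nat.choose_one_right, pow_add d, pow_succ b]
          simp only [mul_assoc]

section LowerCentralSeries

variable {G : Type*} [Group G]

theorem Subgroup.commutator_commutator_le_of_rotate {H₁ H₂ H₃ N : Subgroup G} [N.Normal]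
    (h₁ : ⁅⁅H₂, H₃⁆, H₁⁆ ≤ N) (h₂ : ⁅⁅H₃, H₁⁆, H₂⁆ ≤ N) : ⁅⁅H₁, H₂⁆, H₃⁆ ≤ N := by
  have hN (H : Subgroup G) : H ≤ N ↔ H.map (QuotientGroup.mk' N) = ⊥ := by
    rw [Subgroup.map_eq_bot_iff, QuotientGroup.ker_mk']
  rw [hN, Subgroup.map_commutator, Subgroup.map_commutator] at h₁ h₂ ⊢
  exact Subgroup.commutator_commutator_eq_bot_of_rotate h₁ h₂

theorem commutator_lowerCentralSeries_le (j : ℕ) :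
    ∀ i : ℕ, ⁅(γ i : Subgroup G), (γ j : Subgroup G)⁆ ≤ γ (i + j + 1) := by
  induction j with
  | zero => exact fun i => le_rfl
  | succ j ih =>
    intro i
    rw [Subgroup.commutator_comm, Subgroup.lowerCentralSeries_succ]
    apply Subgroup.commutator_commutator_le_of_rotate
    · rw [Subgroup.commutator_comm ⊤, show i + (j + 1) + 1 = i + 1 + j + 1 by omega]
      exact ih (i + 1)
    · exact Subgroup.commutator_mono (ih i) le_rfl

theorem mem_lowerCentralSeries_zero (a : G) : a ∈ γ 0 := Subgroup.mem_top a

theorem pcomm_mem_lowerCentralSeries {i j k : ℕ} {a b : G} (ha : a ∈ γ i) (hb : b ∈ γ j)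
    (hk : k ≤ i + j + 1) : pcomm a b ∈ γ k := by
  rw [pcomm_eq_commutatorElement]
  exact Subgroup.lowerCentralSeries_antitone _ hk <| commutator_lowerCentralSeries_le j i
    (Subgroup.commutator_mem_commutator (inv_mem ha) (inv_mem hb))

theorem pcomm_mem_lowerCentralSeries_succ {i : ℕ} {a : G} (ha : a ∈ γ i) (b : G) :
    pcomm a b ∈ γ (i + 1) :=
  pcomm_mem_lowerCentralSeries ha (mem_lowerCentralSeries_zero b) le_rfl

theorem pcommIter_mem_lowerCentralSeries (x y : G) : ∀ k, pcommIter x y k ∈ γ k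
  | 0 => mem_lowerCentralSeries_zero x
  | k + 1 => pcomm_mem_lowerCentralSeries_succ (pcommIter_mem_lowerCentralSeries x y k) y

theorem pcomm_eq_one_of_mem {n i j : ℕ} (hn : γ n = (⊥ : Subgroup G)) {a b : G}
    (ha : a ∈ γ i) (hb : b ∈ γ j) (hij : n ≤ i + j + 1) : pcomm a b = 1 := by
  simpa [hn] using pcomm_mem_lowerCentralSeries ha hb hij

theorem commute_of_mem {n i j : ℕ} (hn : γ n = (⊥ : Subgroup G)) {a b : G}
    (ha : a ∈ γ i) (hb : b ∈ γ j) (hij : n ≤ i + j + 1) : Commute a b :=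
  (pcomm_eq_one_iff a b).mp (pcomm_eq_one_of_mem hn ha hb hij)

end LowerCentralSeries

theorem Nat.dvd_mul_choose (n k : ℕ) : n ∣ k * n.choose k := by
  rcases n with _ | n <;> rcases k with _ | k
  · simp
  · simp
  · simp
  · exact ⟨n.choose k, by rw [mul_comm, ← Nat.add_one_mul_choose_eq]⟩

theorem two_pow_pred_dvd_of_dvd_two_mul {e m : ℕ} (h : 2 ^ e ∣ 2 * m) : 2 ^ (e - 1) ∣ m := by
  rcases e with _ | e
  · exact one_dvd m
  · rw [pow_succ'] at h
    exact Nat.dvd_of_mul_dvd_mul_left two_pos h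

theorem two_pow_pred_dvd_choose_two (e : ℕ) : 2 ^ (e - 1) ∣ (2 ^ e).choose 2 :=
  two_pow_pred_dvd_of_dvd_two_mul (Nat.dvd_mul_choose _ 2)

theorem two_pow_pred_dvd_choose_three (e : ℕ) : 2 ^ (e - 1) ∣ (2 ^ e).choose 3 :=
  (Nat.pow_dvd_pow 2 (Nat.sub_le e 1)).trans <|
    (Nat.Coprime.pow_left e (by norm_num : Nat.Coprime 2 3)).dvd_of_dvd_mul_left
      (Nat.dvd_mul_choose _ 3)

theorem two_pow_pred_dvd_two_mul_choose_four (e : ℕ) : 2 ^ (e - 1) ∣ 2 * (2 ^ e).choose 4 :=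
  two_pow_pred_dvd_of_dvd_two_mul (by rw [← mul_assoc]; exact Nat.dvd_mul_choose _ 4)

theorem pow_eq_one_of_mem_three {G : Type*} [Group G] {e : ℕ}
    (hg4 : ∀ g ∈ (⊤ : Subgroup G).lowerCentralSeries 3, g ^ (2 ^ (e - 1)) = 1)
    {g : G} (hg : g ∈ γ 3) {m : ℕ} (hm : 2 ^ (e - 1) ∣ m) : g ^ m = 1 := by
  obtain ⟨t, rfl⟩ := hm
  rw [pow_mul, hg4 g hg, one_pow]

theorem mul_pow_eq_one_of_relations {A : Type*} [CommGroup A] {K M : ℕ} {u v s m p n t : A}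
    (hu : u ^ K * s ^ M = 1) (hv : v ^ K * t ^ M = 1) (hp : p ^ (2 * M) = 1)
    (hw : u ^ K * v ^ K * (s * m * p * (p * (n * t))) ^ M = 1) : (m * n) ^ M = 1 :=
  calc (m * n) ^ M = u ^ K * s ^ M * (v ^ K * t ^ M) * p ^ (2 * M) * (m * n) ^ M := by
        rw [hu, hv, hp, one_mul, one_mul, one_mul]
    _ = u ^ K * v ^ K * (s * m * p * (p * (n * t))) ^ M := by
        rw [two_mul, pow_add]; simp only [mul_pow, mul_comm, mul_assoc, mul_left_comm]
    _ = 1 := hw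

section ClassFive

variable {G : Type*} [Group G] (h5 : γ 5 = (⊥ : Subgroup G))
include h5

theorem pcomm_eq_one_of_mem_four {z : G} (hz : z ∈ γ 4) (g : G) : pcomm z g = 1 :=
  pcomm_eq_one_of_mem h5 hz (mem_lowerCentralSeries_zero g) le_rfl

theorem commute_of_mem_four {z : G} (hz : z ∈ γ 4) (g : G) : Commute z g :=
  (pcomm_eq_one_iff z g).mp (pcomm_eq_one_of_mem_four h5 hz g)

theorem pcomm_pow_right (x y : G) (n : ℕ) :
    pcomm x (y ^ n) = pcommIter x y 1 ^ n * pcommIter x y 2 ^ n.choose 2 *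
      pcommIter x y 3 ^ n.choose 3 * pcommIter x y 4 ^ n.choose 4 *
      pcomm (pcommIter x y 2) (pcommIter x y 1) ^ n.choose 3 := by
  set c := pcommIter x y
  have hc (k : ℕ) : c k ∈ γ k := pcommIter_mem_lowerCentralSeries x y k
  have hd : pcomm (c 2) (c 1) ∈ γ 4 := pcomm_mem_lowerCentralSeries (hc 2) (hc 1) le_rfl
  have hconj (g : G) : MulAut.conj y⁻¹ g = g * pcomm g y := by
    rw [MulAut.conj_apply, inv_inv, inv_mul_mul_eq_mul_pcomm]
  apply mul_left_cancel (a := x)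
  rw [← inv_mul_mul_eq_mul_pcomm]
  induction n with
  | zero => simp
  | succ n ih =>
    calc (y ^ (n + 1))⁻¹ * x * y ^ (n + 1) = MulAut.conj y⁻¹ ((y ^ n)⁻¹ * x * y ^ n) := by
          rw [MulAut.conj_apply, inv_inv, pow_succ]; group
      _ = x * c 1 * ((c 1 * c 2) ^ n * (c 2 * c 3) ^ n.choose 2 * (c 3 * c 4) ^ n.choose 3 *
            c 4 ^ n.choose 4 * pcomm (c 2) (c 1) ^ n.choose 3) := by
          rw [ih]
          simp only [map_mul, map_pow]
          simp only [hconj, pcomm_eq_one_of_mem_four h5 (hc 4), pcomm_eq_one_of_mem_four h5 hd,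
            mul_one]
          rfl
      _ = _ := by
          rw [mul_pow_of_commute_pcomm (commute_of_mem_four h5 hd _).symm
              (commute_of_mem_four h5 hd _).symm,
            (commute_of_mem h5 (hc 2) (hc 3) (by norm_num)).mul_pow,
            (commute_of_mem_four h5 (hc 4) _).symm.mul_pow,
            Nat.choose_succ_succ, Nat.choose_succ_succ, Nat.choose_succ_succ, Nat.choose_one_right,
            pow_succ', pow_add, pow_add, pow_add, pow_add]
          simp only [mul_assoc, ((commute_of_mem_four h5 hd _).pow_left _).left_comm]

theorem pcomm_mul_of_mem_four {r : G} (hr : r ∈ γ 4) (a b : G) : pcomm (a * r) b = pcomm a b := by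
  rw [pcomm_mul_left, pcomm_eq_one_of_mem_four h5 hr, (pcomm_eq_one_iff _ _).mpr
    (commute_of_mem_four h5 hr _).symm, mul_one, mul_one]

theorem pcomm_inv_left_of_mem {i : ℕ} {a : G} (ha : a ∈ γ i) (hi : 2 ≤ i) (b : G) :
    pcomm a⁻¹ b = (pcomm a b)⁻¹ := by
  rw [pcomm_inv_left, pcomm_eq_one_of_mem h5 (inv_mem (pcomm_mem_lowerCentralSeries_succ ha b))
    (inv_mem ha) (by omega), mul_one]

theorem pcomm_mul_left_of_mem {i j : ℕ} {a b : G} (ha : a ∈ γ i) (hb : b ∈ γ j) (hij : 3 ≤ i + j)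
    (w : G) : pcomm (a * b) w = pcomm a w * pcomm b w := by
  rw [pcomm_mul_left, pcomm_eq_one_of_mem h5 (pcomm_mem_lowerCentralSeries_succ ha w) hb (by omega),
    mul_one]

theorem pcomm_mul_right_of_mem_three {a : G} (ha : a ∈ γ 3) (y x : G) :
    pcomm a (y * x) = pcomm a x * pcomm a y := by
  rw [pcomm_mul_right, pcomm_eq_one_of_mem_four h5 (pcomm_mem_lowerCentralSeries_succ ha y),
    mul_one]

theorem pcomm_pcomm_mul_left_of_mem_two {a b : G} (ha : a ∈ γ 2) (hb : b ∈ γ 2) (w : G) :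
    pcomm (pcomm (a * b) w) w = pcomm (pcomm a w) w * pcomm (pcomm b w) w := by
  rw [pcomm_mul_left_of_mem h5 ha hb (by norm_num), pcomm_mul_left_of_mem h5
    (pcomm_mem_lowerCentralSeries_succ ha w) (pcomm_mem_lowerCentralSeries_succ hb w) (by norm_num)]

theorem pcomm_pcomm_mul_right_of_mem_two {a : G} (ha : a ∈ γ 2) (y x : G) :
    pcomm (pcomm a (y * x)) (y * x) =
      pcomm (pcomm a x) x * pcomm (pcomm a x) y * (pcomm (pcomm a y) x * pcomm (pcomm a y) y) := by
  have hax := pcomm_mem_lowerCentralSeries_succ ha x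
  have hay := pcomm_mem_lowerCentralSeries_succ ha y
  rw [pcomm_mul_right a y x, pcomm_mul_left_of_mem h5 (mul_mem hax hay)
      (pcomm_mem_lowerCentralSeries_succ hay x) (by norm_num),
    pcomm_eq_one_of_mem_four h5 (pcomm_mem_lowerCentralSeries_succ hay x), mul_one,
    pcomm_mul_left_of_mem h5 hax hay (by norm_num), pcomm_mul_right_of_mem_three h5 hax,
    pcomm_mul_right_of_mem_three h5 hay]

theorem exists_pcomm_pcomm_mul_self (x y : G) : ∃ q ∈ γ 3,
    pcomm (pcomm x (y * x)) (y * x) = pcomm (pcomm x y) x * pcomm (pcomm x y) y * q := by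
  have hc : pcomm x y ∈ γ 1 := pcommIter_mem_lowerCentralSeries x y 1
  have hu := pcomm_mem_lowerCentralSeries_succ hc x
  refine ⟨pcomm (pcomm (pcomm x y) y) x * pcomm (pcomm (pcomm x y) x) (y * x),
    mul_mem (pcomm_mem_lowerCentralSeries_succ (pcomm_mem_lowerCentralSeries_succ hc y) x)
      (pcomm_mem_lowerCentralSeries_succ hu _), ?_⟩
  rw [pcomm_mul_right x y x, pcomm_self, one_mul, pcomm_mul_left_of_mem h5 hc hu (by norm_num),
    pcomm_mul_right, mul_assoc]

theorem pcommIter_mul_self_four (x y : G) :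
    pcommIter x (y * x) 4 =
      pcomm (pcomm (pcomm (pcomm x y) x) x) x * pcomm (pcomm (pcomm (pcomm x y) x) x) y *
        (pcomm (pcomm (pcomm (pcomm x y) x) y) x * pcomm (pcomm (pcomm (pcomm x y) x) y) y) *
      (pcomm (pcomm (pcomm (pcomm x y) y) x) x * pcomm (pcomm (pcomm (pcomm x y) y) x) y *
        (pcomm (pcomm (pcomm (pcomm x y) y) y) x * pcomm (pcomm (pcomm (pcomm x y) y) y) y)) := by
  obtain ⟨q, hq, h⟩ := exists_pcomm_pcomm_mul_self h5 x y
  have hc : pcomm x y ∈ γ 1 := pcommIter_mem_lowerCentralSeries x y 1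
  have hu := pcomm_mem_lowerCentralSeries_succ hc x
  have hv := pcomm_mem_lowerCentralSeries_succ hc y
  show pcomm (pcomm (pcomm (pcomm x (y * x)) (y * x)) (y * x)) (y * x) = _
  rw [h, pcomm_pcomm_mul_left_of_mem_two h5 (mul_mem hu hv)
      (Subgroup.lowerCentralSeries_antitone _ (by norm_num) hq),
    pcomm_eq_one_of_mem_four h5 (pcomm_mem_lowerCentralSeries_succ hq _), mul_one,
    pcomm_pcomm_mul_left_of_mem_two h5 hu hv, pcomm_pcomm_mul_right_of_mem_two h5 hu,
    pcomm_pcomm_mul_right_of_mem_two h5 hv]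

theorem exists_pcomm_pcomm_swap (x y : G) : ∃ r ∈ γ 4,
    pcomm (pcomm (pcomm x y) x) y = pcomm (pcomm (pcomm x y) y) x * r := by
  set c := pcomm x y
  set u := pcomm c x
  set v := pcomm c y
  have hc : c ∈ γ 1 := pcommIter_mem_lowerCentralSeries x y 1
  have hu : u ∈ γ 2 := pcomm_mem_lowerCentralSeries_succ hc x
  have hv : v ∈ γ 2 := pcomm_mem_lowerCentralSeries_succ hc y
  have huc : pcomm u c ∈ γ 4 := pcomm_mem_lowerCentralSeries hu hc le_rfl
  have hvc : pcomm v c ∈ γ 4 := pcomm_mem_lowerCentralSeries hv hc le_rfl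
  refine ⟨pcomm v c * pcomm u c, mul_mem hvc huc, ?_⟩
  -- expand `[c, xy]` directly and through `xy = y (x c)`
  have h₁ : pcomm c (x * y) = v * u * pcomm u y := pcomm_mul_right c x y
  have h₂ : pcomm c (x * y) = u * pcomm u c * v * (pcomm v c * pcomm v x) := by
    rw [mul_eq_mul_mul_pcomm x y, mul_assoc, pcomm_mul_right c y, pcomm_mul_right c x c, pcomm_self,
      one_mul, pcomm_mul_right v x c, pcomm_eq_one_of_mem h5
        (pcomm_mem_lowerCentralSeries_succ hv x) hc le_rfl, mul_one]
  apply mul_left_cancel (a := v * u)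
  rw [← h₁, h₂]
  simp only [mul_assoc, (commute_of_mem_four h5 huc _).left_comm]
  rw [(commute_of_mem h5 hu hv le_rfl).left_comm, ← mul_assoc (pcomm v c),
    (commute_of_mem_four h5 (mul_mem hvc huc) _).eq]

theorem pcomm_pcomm_pcomm_swap (x y z : G) :
    pcomm (pcomm (pcomm (pcomm x y) x) y) z = pcomm (pcomm (pcomm (pcomm x y) y) x) z := by
  obtain ⟨r, hr, h⟩ := exists_pcomm_pcomm_swap h5 x y
  rw [h, pcomm_mul_of_mem_four h5 hr]

theorem isMulCommutative_lowerCentralSeries_two : IsMulCommutative (γ 2 : Subgroup G) :=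
  isMulCommutative_iff.mpr fun a b => Subtype.ext (commute_of_mem h5 a.2 b.2 le_rfl).eq

variable {e : ℕ} (hexp : ∀ g : G, g ^ (2 ^ e) = 1)
  (hg4 : ∀ g ∈ (⊤ : Subgroup G).lowerCentralSeries 3, g ^ (2 ^ (e - 1)) = 1)
include hg4

theorem pcommIter_mul_self_two_pow (x y : G) :
    pcommIter x (y * x) 2 ^ (2 ^ e).choose 2 =
      pcomm (pcomm x y) x ^ (2 ^ e).choose 2 * pcomm (pcomm x y) y ^ (2 ^ e).choose 2 := by
  obtain ⟨q, hq, h⟩ := exists_pcomm_pcomm_mul_self h5 x y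
  have hc : pcomm x y ∈ γ 1 := pcommIter_mem_lowerCentralSeries x y 1
  have hu := pcomm_mem_lowerCentralSeries_succ hc x
  have hv := pcomm_mem_lowerCentralSeries_succ hc y
  change pcomm (pcomm x (y * x)) (y * x) ^ _ = _
  rw [h, (commute_of_mem h5 (mul_mem hu hv) hq (by norm_num)).mul_pow,
    pow_eq_one_of_mem_three hg4 hq (two_pow_pred_dvd_choose_two e), mul_one,
    (commute_of_mem h5 hu hv le_rfl).mul_pow]

include hexp

theorem pcommIter_two_pow_mul_pcommIter_four_pow_eq_one (x y : G) :
    pcommIter x y 2 ^ (2 ^ e).choose 2 * pcommIter x y 4 ^ (2 ^ e).choose 4 = 1 := by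
  have h := pcomm_pow_right h5 x y (2 ^ e)
  have hd : pcomm (pcommIter x y 2) (pcommIter x y 1) ∈ γ 3 :=
    pcomm_mem_lowerCentralSeries (pcommIter_mem_lowerCentralSeries x y 2)
      (pcommIter_mem_lowerCentralSeries x y 1) (by norm_num)
  rw [hexp, pcomm_one_right, hexp, pow_eq_one_of_mem_three hg4
      (pcommIter_mem_lowerCentralSeries x y 3) (two_pow_pred_dvd_choose_three e),
    pow_eq_one_of_mem_three hg4 hd (two_pow_pred_dvd_choose_three e)] at h
  simpa using h.symm

theorem pcomm_pcomm_self_pow_mul_eq_one (x y : G) :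
    pcomm (pcomm x y) x ^ (2 ^ e).choose 2 *
      pcomm (pcomm (pcomm (pcomm x y) x) x) x ^ (2 ^ e).choose 4 = 1 := by
  have h := pcommIter_two_pow_mul_pcommIter_four_pow_eq_one h5 hexp hg4 y x
  change pcomm (pcomm y x) x ^ _ * pcomm (pcomm (pcomm (pcomm y x) x) x) x ^ _ = 1 at h
  set c := pcomm x y
  set u := pcomm c x
  have hc : c ∈ γ 1 := pcommIter_mem_lowerCentralSeries x y 1
  have hu : u ∈ γ 2 := pcomm_mem_lowerCentralSeries_succ hc x
  have hA : pcomm u x ∈ γ 3 := pcomm_mem_lowerCentralSeries_succ hu x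
  have hz : pcomm u⁻¹ c⁻¹ ∈ γ 4 := pcomm_mem_lowerCentralSeries (inv_mem hu) (inv_mem hc) le_rfl
  rw [← pcomm_inv x y, pcomm_inv_left, pcomm_mul_of_mem_four h5 hz,
    pcomm_inv_left_of_mem h5 hu le_rfl x, pcomm_inv_left_of_mem h5 hA (by norm_num) x,
    (commute_of_mem_four h5 hz _).symm.mul_pow,
    pow_eq_one_of_mem_three hg4 (Subgroup.lowerCentralSeries_antitone _ (by norm_num) hz)
      (two_pow_pred_dvd_choose_two e),
    mul_one, inv_pow, inv_pow, ← mul_inv_rev, inv_eq_one] at h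
  rwa [((commute_of_mem_four h5 (pcomm_mem_lowerCentralSeries_succ hA x) u).pow_pow _ _).eq] at h

theorem pcomm_mul_pcomm_pow_choose_four_eq_one (x y : G) :
    (pcomm (pcomm (pcomm (pcomm x y) x) x) y *
      pcomm (pcomm (pcomm (pcomm x y) y) y) x) ^ (2 ^ e).choose 4 = 1 := by
  have hu := pcomm_pcomm_self_pow_mul_eq_one h5 hexp hg4 x y
  have hv := pcommIter_two_pow_mul_pcommIter_four_pow_eq_one h5 hexp hg4 x y
  have hw := pcommIter_two_pow_mul_pcommIter_four_pow_eq_one h5 hexp hg4 x (y * x)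
  rw [pcommIter_mul_self_two_pow h5 hg4, pcommIter_mul_self_four h5,
    pcomm_pcomm_pcomm_swap h5 x y x, pcomm_pcomm_pcomm_swap h5 x y y] at hw
  set V := pcomm (pcomm (pcomm x y) y) x
  have hV : V ∈ γ 3 := pcomm_mem_lowerCentralSeries_succ
    (pcomm_mem_lowerCentralSeries_succ (pcommIter_mem_lowerCentralSeries x y 1) y) x
  have hp : (pcomm V x * pcomm V y) ^ (2 * (2 ^ e).choose 4) = 1 :=
    pow_eq_one_of_mem_three hg4 (mul_mem
      (pcomm_mem_lowerCentralSeries hV (mem_lowerCentralSeries_zero x) (by norm_num))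
      (pcomm_mem_lowerCentralSeries hV (mem_lowerCentralSeries_zero y) (by norm_num)))
      (two_pow_pred_dvd_two_mul_choose_four e)
  have := isMulCommutative_lowerCentralSeries_two h5
  have m2 (a b c : G) : pcomm (pcomm a b) c ∈ γ 2 := pcomm_mem_lowerCentralSeries_succ
    (pcomm_mem_lowerCentralSeries_succ (mem_lowerCentralSeries_zero a) b) c
  exact congrArg Subtype.val (mul_pow_eq_one_of_relations (u := ⟨_, m2 _ _ _⟩) (v := ⟨_, m2 _ _ _⟩)
    (s := ⟨_, m2 _ _ _⟩) (m := ⟨_, m2 _ _ _⟩) (p := ⟨_, mul_mem (m2 _ _ _) (m2 _ _ _)⟩)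
    (n := ⟨_, m2 _ _ _⟩) (t := ⟨_, m2 _ _ _⟩) (Subtype.ext hu) (Subtype.ext hv) (Subtype.ext hp)
    (Subtype.ext hw))

end ClassFive

theorem class_le_five_comm_power_formula_general {G : Type*} [Group G] (e : ℕ)
    (h5 : (⊤ : Subgroup G).lowerCentralSeries 5 = ⊥)
    (hexp : ∀ g : G, g ^ (2 ^ e) = 1)
    (hg4 : ∀ g ∈ (⊤ : Subgroup G).lowerCentralSeries 3, g ^ (2 ^ (e - 1)) = 1) :
    ∀ x y : G,
      (pcomm x y) ^ (2 ^ e)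
        = (pcomm (pcomm (pcomm (pcomm x y) x) x) y *
            pcomm (pcomm (pcomm (pcomm x y) y) y) x) ^ ((2 ^ e).choose 4) := by
  intro x y
  rw [hexp, pcomm_mul_pcomm_pow_choose_four_eq_one h5 hexp hg4]

/-- class ≤ 5, `e > 2`, exponent dividing `2^e`,
`γ₄(G)^{2^{e-1}} = 1`, `γ₃(G)^{2^e} = 1` imply
`[x,y]^{2^e} = ([x,y,x,x,y]·[x,y,y,y,x])^{C(2^e,4)}`. -/
theorem class_le_five_comm_power_formula {G : Type*} [Group G] (e : ℕ) (he : 2 < e)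
    (h5 : (⊤ : Subgroup G).lowerCentralSeries 5 = ⊥)
    (hexp : ∀ g : G, g ^ (2 ^ e) = 1)
    (hg4 : ∀ g ∈ (⊤ : Subgroup G).lowerCentralSeries 3, g ^ (2 ^ (e - 1)) = 1)
    (hg3 : ∀ g ∈ (⊤ : Subgroup G).lowerCentralSeries 2, g ^ (2 ^ e) = 1) :
    ∀ x y : G,
      (pcomm x y) ^ (2 ^ e)
        = (pcomm (pcomm (pcomm (pcomm x y) x) x) y *
            pcomm (pcomm (pcomm (pcomm x y) y) y) x) ^ ((2 ^ e).choose 4) :=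
  class_le_five_comm_power_formula_general e h5 hexp hg4
end

section
/- Let G be a group of nilpotency class ≤ 5, x, y ∈ G, u = [y,x][y,x,y]. Then [y⁻¹, u] = [y,x,y], [y⁻¹,u,y⁻¹] = [y,x,y,y,y]·[y,x,y,y]⁻¹, and [y⁻¹,u,y⁻¹,y⁻¹] = [y,x,y,y,y]. -/
open scoped commutatorElement

section

variable {G : Type*} [Group G]

theorem pcomm_eq_commutatorElement_s18 (g h : G) : pcomm g h = ⁅g⁻¹, h⁻¹⁆ := by
  simp only [pcomm, commutatorElement_def, inv_inv]

theorem pcomm_eq_one_iff_s18 {g h : G} : pcomm g h = 1 ↔ Commute g h := by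
  rw [pcomm_eq_commutatorElement_s18, commutatorElement_eq_one_iff_commute, Commute.inv_inv_iff]

theorem pcomm_inv_mul_pcomm (a y : G) : pcomm y⁻¹ (a * pcomm a y) = pcomm a y := by
  simp only [pcomm]; group

theorem Commute.pcomm_mul_left {d z : G} (h : Commute d z) (k : G) :
    pcomm (d * k) z = pcomm k z := by
  simp only [pcomm, mul_inv_rev, mul_assoc, h.inv_inv.left_comm, inv_mul_cancel_left]

theorem pcomm_inv_right (g y : G) : pcomm g y⁻¹ = y * (pcomm g y)⁻¹ * y⁻¹ := by
  simp only [pcomm]; group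

theorem pcomm_inv_right_of_commute {g y : G} (h : Commute (pcomm g y) y) :
    pcomm g y⁻¹ = (pcomm g y)⁻¹ := by
  rw [pcomm_inv_right, ← h.inv_left.eq, mul_inv_cancel_right]

theorem pcomm_inv_right_of_commute_pcomm {g y : G} (h : Commute (pcomm (pcomm g y) y) y) :
    pcomm g y⁻¹ = pcomm (pcomm g y) y * (pcomm g y)⁻¹ := by
  calc pcomm g y⁻¹ = (y * pcomm g y * y⁻¹)⁻¹ := by rw [pcomm_inv_right]; group
    _ = (pcomm g y * pcomm (pcomm g y) y⁻¹)⁻¹ := by simp only [pcomm]; group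
    _ = pcomm (pcomm g y) y * (pcomm g y)⁻¹ := by
      rw [pcomm_inv_right_of_commute h, mul_inv_rev, inv_inv]

theorem pcomm_pcomm_inv_right_of_commute_pcomm {g y : G}
    (hy : Commute (pcomm (pcomm g y) y) y) (hc : Commute (pcomm (pcomm g y) y) (pcomm g y)) :
    pcomm (pcomm g y⁻¹) y⁻¹ = pcomm (pcomm g y) y := by
  set c := pcomm g y
  set d := pcomm c y
  have hgy : pcomm g y⁻¹ = d * c⁻¹ := pcomm_inv_right_of_commute_pcomm hy
  calc pcomm (pcomm g y⁻¹) y⁻¹ = pcomm c⁻¹ y⁻¹ := by rw [hgy, hy.inv_right.pcomm_mul_left]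
    _ = c * (y * c⁻¹ * y⁻¹) := by simp only [pcomm]; group
    _ = c * (d * c⁻¹) := by rw [← hgy, pcomm_inv_right]
    _ = d := by rw [← mul_assoc, ← hc.eq, mul_inv_cancel_right]

theorem pcomm_mem_lowerCentralSeries_succ_s18 (S : Subgroup G) {n : ℕ} {g h : G}
    (hg : g ∈ S.lowerCentralSeries n) (hh : h ∈ S) : pcomm g h ∈ S.lowerCentralSeries (n + 1) := by
  rw [pcomm_eq_commutatorElement_s18]
  exact Subgroup.commutator_mem_commutator (inv_mem hg) (inv_mem hh)

theorem commute_of_mem_lowerCentralSeries (S : Subgroup G) {n : ℕ}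
    (hn : S.lowerCentralSeries (n + 1) = ⊥)
    {g h : G} (hg : g ∈ S.lowerCentralSeries n) (hh : h ∈ S) : Commute g h := by
  rw [← pcomm_eq_one_iff_s18, ← Subgroup.mem_bot, ← hn]
  exact pcomm_mem_lowerCentralSeries_succ_s18 S hg hh

end

/-- in a class ≤ 5 group with `u = [y,x][y,x,y]`:
`[y⁻¹,u] = [y,x,y]`, `[y⁻¹,u,y⁻¹] = [y,x,y,y,y]·[y,x,y,y]⁻¹`, and
`[y⁻¹,u,y⁻¹,y⁻¹] = [y,x,y,y,y]`. -/
theorem class_le_five_u_identities {G : Type*} [Group G]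
    (h5 : (⊤ : Subgroup G).lowerCentralSeries 5 = ⊥) (x y : G) :
    pcomm y⁻¹ (pcomm y x * pcomm (pcomm y x) y) = pcomm (pcomm y x) y ∧
    pcomm (pcomm y⁻¹ (pcomm y x * pcomm (pcomm y x) y)) y⁻¹
      = pcomm (pcomm (pcomm (pcomm y x) y) y) y *
          (pcomm (pcomm (pcomm y x) y) y)⁻¹ ∧
    pcomm (pcomm (pcomm y⁻¹ (pcomm y x * pcomm (pcomm y x) y)) y⁻¹) y⁻¹
      = pcomm (pcomm (pcomm (pcomm y x) y) y) y := by
  have step {n : ℕ} {g : G} (hg : g ∈ (⊤ : Subgroup G).lowerCentralSeries n) (h : G) :=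
    pcomm_mem_lowerCentralSeries_succ_s18 ⊤ hg (Subgroup.mem_top h)
  have hd := step (step (step (step (n := 0) (Subgroup.mem_top y) x) y) y) y
  have central (g : G) : Commute (pcomm (pcomm (pcomm (pcomm y x) y) y) y) g :=
    commute_of_mem_lowerCentralSeries ⊤ h5 hd (Subgroup.mem_top g)
  rw [pcomm_inv_mul_pcomm]
  exact ⟨rfl, pcomm_inv_right_of_commute_pcomm (central y),
    pcomm_pcomm_inv_right_of_commute_pcomm (central y) (central _)⟩
end
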